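/- arXiv:2209.05785 — 5 statements merged into one kernel-verified Lean document; each statement's English description precedes it below -/
import Mathlib

section
/- Let E be a real inner product space, let T ≥ 1 be a natural number, and let L : E → ℝ be a convex, differentiable function. Let θ* ∈ E, let Δ > 0 and σ > 0, and let θ_0, θ_1, …, θ_{T-1}, θ_T be points of E generated by the approximate gradient-descent update θ_{t+1} = θ_t − α·g_t for t = 0, …, T−1, where each g_t ∈ E satisfies ‖g_t‖ ≤ σ, the constant learning rate is α = Δ/(σ·√T), and ‖θ_t − θ*‖ ≤ Δ for all t = 0, …, T−1. Then min_{t=0,…,T−1} (L(θ_t) − L(θ*)) ≤ Δσ/√T + (Δ/T)·∑_{t=0}^{T−1} ‖∇L(θ_t) − g_t‖. -/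
/-!
Convexity gives `L θₜ - L θ* ≤ ⟪∇L θₜ, θₜ - θ*⟫`; writing `∇L θₜ = gₜ + (∇L θₜ - gₜ)`, the error
part is at most `‖∇L θₜ - gₜ‖ Δ` by Cauchy–Schwarz, while expanding `‖θₜ₊₁ - θ*‖²` turns
`2α ⟪gₜ, θₜ - θ*⟫` into a telescoping difference of squared distances plus `α² ‖gₜ‖²`. Summing over
`t` bounds the average suboptimality, which dominates the minimum.
-/

open Finset

theorem ConvexOn.apply_sub_le_of_hasFDerivAt {E : Type*} [NormedAddCommGroup E] [NormedSpace ℝ E]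
    {S : Set E} {f : E → ℝ} {f' : E →L[ℝ] ℝ} {x y : E} (hf : ConvexOn ℝ S f)
    (hx : x ∈ S) (hy : y ∈ S) (hfx : HasFDerivAt f f' x) :
    f' (y - x) ≤ f y - f x := by
  have hline : HasDerivAt (AffineMap.lineMap (k := ℝ) x y) (y - x) 0 :=
    AffineMap.hasDerivAt_lineMap
  have hderiv : HasDerivAt (f ∘ AffineMap.lineMap (k := ℝ) x y) (f' (y - x)) 0 :=
    hfx.comp_hasDerivAt_of_eq 0 hline (by simp)
  have := (hf.comp_affineMap (AffineMap.lineMap x y)).le_slope_of_hasDerivAt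
    (by simpa using hx) (by simpa using hy) one_pos hderiv
  simpa [slope_def_field] using this

section ApproximateGradientDescent

variable {E : Type*} [NormedAddCommGroup E] [InnerProductSpace ℝ E]

theorem norm_sub_smul_sub_sq (x y g : E) (α : ℝ) :
    ‖x - α • g - y‖ ^ 2 = ‖x - y‖ ^ 2 - 2 * α * inner ℝ g (x - y) + α ^ 2 * ‖g‖ ^ 2 := by
  rw [sub_right_comm, norm_sub_sq_real, real_inner_smul_right, real_inner_comm, norm_smul,
    mul_pow, Real.norm_eq_abs, sq_abs]
  ring

variable {L : E → ℝ} {gradL : E → E}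

theorem ConvexOn.sub_le_inner_gradient (hconv : ConvexOn ℝ Set.univ L) {x : E}
    (hgrad : HasFDerivAt L (innerSL ℝ (gradL x)) x) (y : E) :
    L x - L y ≤ inner ℝ (gradL x) (x - y) := by
  have := hconv.apply_sub_le_of_hasFDerivAt (Set.mem_univ x) (Set.mem_univ y) hgrad
  rw [innerSL_apply_apply, ← neg_sub x y, inner_neg_right] at this
  linarith

theorem ConvexOn.two_mul_sub_le_of_approx_gradient_step (hconv : ConvexOn ℝ Set.univ L) {x : E}
    (hgrad : HasFDerivAt L (innerSL ℝ (gradL x)) x) {α : ℝ} (hα : 0 ≤ α) (g y : E) :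
    2 * α * (L x - L y) ≤ ‖x - y‖ ^ 2 - ‖x - α • g - y‖ ^ 2 + α ^ 2 * ‖g‖ ^ 2
      + 2 * α * (‖gradL x - g‖ * ‖x - y‖) := by
  have herr : inner ℝ (gradL x - g) (x - y) ≤ ‖gradL x - g‖ * ‖x - y‖ := real_inner_le_norm _ _
  have hsplit : L x - L y ≤ inner ℝ g (x - y) + ‖gradL x - g‖ * ‖x - y‖ := by
    have := hconv.sub_le_inner_gradient hgrad y
    rw [← sub_add_cancel (gradL x) g, inner_add_left] at this
    linarith
  rw [norm_sub_smul_sub_sq]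
  nlinarith [mul_le_mul_of_nonneg_left hsplit (by positivity : (0 : ℝ) ≤ 2 * α)]

theorem ConvexOn.two_mul_sum_sub_le_of_approx_gradient_descent (hconv : ConvexOn ℝ Set.univ L)
    (hgrad : ∀ x, HasFDerivAt L (innerSL ℝ (gradL x)) x) {α : ℝ} (hα : 0 ≤ α) {θ g : ℕ → E}
    {T : ℕ} (hupd : ∀ t < T, θ (t + 1) = θ t - α • g t) (y : E) :
    2 * α * ∑ t ∈ range T, (L (θ t) - L y) ≤ ‖θ 0 - y‖ ^ 2
      + α ^ 2 * ∑ t ∈ range T, ‖g t‖ ^ 2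
      + 2 * α * ∑ t ∈ range T, ‖gradL (θ t) - g t‖ * ‖θ t - y‖ := by
  have hstep : ∀ t ∈ range T, 2 * α * (L (θ t) - L y) ≤
      (‖θ t - y‖ ^ 2 - ‖θ (t + 1) - y‖ ^ 2)
        + (α ^ 2 * ‖g t‖ ^ 2 + 2 * α * (‖gradL (θ t) - g t‖ * ‖θ t - y‖)) := fun t ht => by
    rw [hupd t (mem_range.mp ht), ← add_assoc]
    exact hconv.two_mul_sub_le_of_approx_gradient_step (hgrad _) hα (g t) y
  calc 2 * α * ∑ t ∈ range T, (L (θ t) - L y)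
      ≤ (‖θ 0 - y‖ ^ 2 - ‖θ T - y‖ ^ 2) + ∑ t ∈ range T,
          (α ^ 2 * ‖g t‖ ^ 2 + 2 * α * (‖gradL (θ t) - g t‖ * ‖θ t - y‖)) := by
        rw [mul_sum, ← sum_range_sub' (fun t => ‖θ t - y‖ ^ 2), ← sum_add_distrib]
        exact sum_le_sum hstep
    _ ≤ _ := by
        rw [sum_add_distrib, ← mul_sum, ← mul_sum]
        nlinarith [sq_nonneg ‖θ T - y‖]

theorem ConvexOn.sum_sub_le_of_approx_gradient_descent (hconv : ConvexOn ℝ Set.univ L)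
    (hgrad : ∀ x, HasFDerivAt L (innerSL ℝ (gradL x)) x) {α : ℝ} (hα : 0 < α) {θ g : ℕ → E}
    {T : ℕ} (hupd : ∀ t < T, θ (t + 1) = θ t - α • g t) {y : E} {Δ σ : ℝ} (hT : 0 < T)
    (hg : ∀ t < T, ‖g t‖ ≤ σ) (hθ : ∀ t < T, ‖θ t - y‖ ≤ Δ) :
    ∑ t ∈ range T, (L (θ t) - L y) ≤
      Δ ^ 2 / (2 * α) + T * α * σ ^ 2 / 2 + Δ * ∑ t ∈ range T, ‖gradL (θ t) - g t‖ := by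
  have hregret := hconv.two_mul_sum_sub_le_of_approx_gradient_descent hgrad hα.le hupd y
  have hstart : ‖θ 0 - y‖ ^ 2 ≤ Δ ^ 2 :=
    pow_le_pow_left₀ (norm_nonneg _) (hθ 0 hT) 2
  have hsteps : ∑ t ∈ range T, ‖g t‖ ^ 2 ≤ T * σ ^ 2 := by
    simpa using sum_le_sum fun t ht =>
      pow_le_pow_left₀ (norm_nonneg _) (hg t (mem_range.mp ht)) 2
  have herrors : ∑ t ∈ range T, ‖gradL (θ t) - g t‖ * ‖θ t - y‖ ≤
      Δ * ∑ t ∈ range T, ‖gradL (θ t) - g t‖ := by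
    rw [mul_sum]
    refine sum_le_sum fun t ht => ?_
    rw [mul_comm Δ]
    exact mul_le_mul_of_nonneg_left (hθ t (mem_range.mp ht)) (norm_nonneg _)
  rw [← mul_le_mul_iff_right₀ (by positivity : (0 : ℝ) < 2 * α)]
  have hscale : 2 * α * (Δ ^ 2 / (2 * α) + T * α * σ ^ 2 / 2
      + Δ * ∑ t ∈ range T, ‖gradL (θ t) - g t‖)
      = Δ ^ 2 + α ^ 2 * (T * σ ^ 2) + 2 * α * (Δ * ∑ t ∈ range T, ‖gradL (θ t) - g t‖) := by
    field_simp
  rw [hscale]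
  exact hregret.trans (by gcongr)

end ApproximateGradientDescent

/-- Convergence of approximate gradient descent for a convex Lipschitz-gradient-bounded
objective with constant learning rate `α = Δ/(σ√T)` (Theorem 1, part 1). -/
theorem adversarial_coreset_convergence_convex_lipschitz
    {E : Type*} [NormedAddCommGroup E] [InnerProductSpace ℝ E]
    (T : ℕ) (hT : 1 ≤ T)
    (L : E → ℝ) (gradL : E → E)
    (hconv : ConvexOn ℝ Set.univ L)
    (hgrad : ∀ x, HasFDerivAt L (innerSL ℝ (gradL x)) x)
    (θstar : E) (Δ σ : ℝ) (hΔ : 0 < Δ) (hσ : 0 < σ)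
    (θ g : ℕ → E)
    (hupd : ∀ t < T, θ (t + 1) = θ t - (Δ / (σ * Real.sqrt T)) • g t)
    (hg : ∀ t < T, ‖g t‖ ≤ σ)
    (hθ : ∀ t < T, ‖θ t - θstar‖ ≤ Δ) :
    (Finset.range T).inf' (Finset.nonempty_range_iff.mpr (by omega))
        (fun t => L (θ t) - L θstar)
      ≤ Δ * σ / Real.sqrt T
        + (Δ / T) * ∑ t ∈ Finset.range T, ‖gradL (θ t) - g t‖ := by
  have hT₀ : (0 : ℝ) < T := by exact_mod_cast hT
  have hsqrt : Real.sqrt T * Real.sqrt T = T := Real.mul_self_sqrt hT₀.le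
  have hsum := hconv.sum_sub_le_of_approx_gradient_descent hgrad (by positivity) hupd hT hg hθ
  have hmin : T * (range T).inf' (nonempty_range_iff.mpr (by omega)) (fun t => L (θ t) - L θstar)
      ≤ ∑ t ∈ range T, (L (θ t) - L θstar) := by
    simpa using card_nsmul_le_sum (range T) (fun t => L (θ t) - L θstar) _
      fun t ht => inf'_le (fun t => L (θ t) - L θstar) ht
  -- with `α = Δ / (σ √T)` the two terms `Δ² / (2α)` and `T α σ² / 2` are both `Δ σ √T / 2`
  have hrate : Δ ^ 2 / (2 * (Δ / (σ * Real.sqrt T))) + T * (Δ / (σ * Real.sqrt T)) * σ ^ 2 / 2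
      = T * (Δ * σ / Real.sqrt T) := by
    field_simp
    linear_combination hsqrt
  rw [← mul_le_mul_iff_right₀ hT₀, mul_add, ← hrate, ← mul_assoc, mul_div_cancel₀ _ hT₀.ne']
  linarith
end

section
/- Let E be a real inner product space, let T ≥ 2 be a natural number, let n be a positive integer and μ > 0, and let L : E → ℝ be a differentiable function that is nμ-strongly convex, i.e., for all x, y ∈ E one has ⟨∇L(x), x − y⟩ ≥ L(x) − L(y) + (nμ/2)·‖x − y‖². Let θ* ∈ E, let Δ > 0 and σ > 0, and let θ_0, θ_1, …, θ_T be points of E generated by the update θ_{t+1} = θ_t − α_t·g_t for t = 0, …, T−1, where each g_t ∈ E satisfies ‖g_t‖ ≤ σ, the learning rate is α_t = 2/(nμ(1+t)), and ‖θ_t − θ*‖ ≤ Δ for all t = 0, …, T−1. Then min_{t=0,…,T−1} (L(θ_t) − L(θ*)) ≤ 2σ²/(nμ(T−1)) + ∑_{t=0}^{T−1} (2Δt/(T(T−1)))·‖∇L(θ_t) − g_t‖. -/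
open scoped RealInnerProductSpace

private lemma sum_ratio_le_aux : ∀ T : ℕ, 1 ≤ T →
    ∑ t ∈ Finset.range T, ((t : ℝ) / (1 + t)) ≤ (T : ℝ) - 1 := by
  intro T
  induction T with
  | zero => intro h; omega
  | succ S ih =>
    intro _
    rcases Nat.eq_zero_or_pos S with rfl | hS
    · simp
    · have h1 : (S : ℝ) / (1 + S) ≤ 1 := by
        rw [div_le_one (by positivity)]; linarith
      have := ih hS
      rw [Finset.sum_range_succ]
      push_cast
      linarith

set_option maxHeartbeats 2000000

/-- Convergence of approximate gradient descent for a strongly convex objective with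
decaying learning rate `α_t = 2/(nμ(1+t))` (Theorem 1, part 2). -/
theorem adversarial_coreset_convergence_strongly_convex
    {E : Type*} [NormedAddCommGroup E] [InnerProductSpace ℝ E]
    (T : ℕ) (hT : 2 ≤ T)
    (n : ℕ) (hn : 0 < n) (μ : ℝ) (hμ : 0 < μ)
    (L : E → ℝ) (gradL : E → E)
    (hgrad : ∀ x, HasFDerivAt L (innerSL ℝ (gradL x)) x)
    (hsc : ∀ x y : E, ⟪gradL x, x - y⟫ ≥ L x - L y + (n * μ / 2) * ‖x - y‖ ^ 2)
    (θstar : E) (Δ σ : ℝ) (hΔ : 0 < Δ) (hσ : 0 < σ)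
    (θ g : ℕ → E)
    (hupd : ∀ t < T, θ (t + 1) = θ t - (2 / (n * μ * (1 + t))) • g t)
    (hg : ∀ t < T, ‖g t‖ ≤ σ)
    (hθ : ∀ t < T, ‖θ t - θstar‖ ≤ Δ) :
    (Finset.range T).inf' (Finset.nonempty_range_iff.mpr (by omega))
        (fun t => L (θ t) - L θstar)
      ≤ 2 * σ ^ 2 / (n * μ * (T - 1))
        + ∑ t ∈ Finset.range T,
            (2 * Δ * t / (T * (T - 1))) * ‖gradL (θ t) - g t‖ := by
  set m : ℝ := (n : ℝ) * μ with hm_def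
  have hm : 0 < m := by positivity
  set e : ℕ → ℝ := fun t => ‖gradL (θ t) - g t‖ with he_def
  set B : ℕ → ℝ := fun t => m * ((t : ℝ) * ((t : ℝ) - 1)) / 4 * ‖θ t - θstar‖ ^ 2
    with hB_def
  have hT2 : (2 : ℝ) ≤ (T : ℝ) := by exact_mod_cast hT
  -- per-step inequality
  have step : ∀ t < T, (t : ℝ) * (L (θ t) - L θstar) ≤ B t - B (t + 1)
      + σ ^ 2 * ((t : ℝ) / (m * (1 + t))) + Δ * t * e t := by
    intro t ht
    have h1t : (0:ℝ) < 1 + (t:ℝ) := by positivity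
    set a : ℝ := 2 / (m * (1 + (t:ℝ))) with ha_def
    have ha : 0 < a := by positivity
    have hr' : θ (t+1) - θstar = (θ t - θstar) - a • g t := by
      rw [hupd t ht]; abel
    have hnorm : ‖θ (t+1) - θstar‖^2
        = ‖θ t - θstar‖^2 - 2*(a*⟪θ t - θstar, g t⟫) + a^2*‖g t‖^2 := by
      rw [hr', norm_sub_sq_real, real_inner_smul_right, norm_smul,
        Real.norm_eq_abs, abs_of_pos ha]
      ring
    have hsc' := hsc (θ t) θstar
    have hCS : ⟪gradL (θ t) - g t, θ t - θstar⟫ ≤ e t * Δ := by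
      calc ⟪gradL (θ t) - g t, θ t - θstar⟫
          ≤ ‖gradL (θ t) - g t‖ * ‖θ t - θstar‖ := real_inner_le_norm _ _
        _ ≤ e t * Δ := mul_le_mul_of_nonneg_left (hθ t ht) (norm_nonneg _)
    have hinner : L (θ t) - L θstar + m/2*‖θ t - θstar‖^2 - Δ * e t
        ≤ ⟪θ t - θstar, g t⟫ := by
      have hsplit : ⟪θ t - θstar, g t⟫
          = ⟪gradL (θ t), θ t - θstar⟫ - ⟪gradL (θ t) - g t, θ t - θstar⟫ := by
        have h1 := inner_sub_left (𝕜 := ℝ) (gradL (θ t)) (g t) (θ t - θstar)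
        have h2 := real_inner_comm (g t) (θ t - θstar)
        linarith
      rw [hsplit]
      have : L (θ t) - L θstar + m / 2 * ‖θ t - θstar‖ ^ 2
          ≤ ⟪gradL (θ t), θ t - θstar⟫ := by
        have := hsc'
        linarith [hsc']
      linarith
    have hg2 : ‖g t‖^2 ≤ σ^2 := by
      nlinarith [norm_nonneg (g t), hg t ht]
    have h4 : ‖θ (t+1) - θstar‖^2 ≤ ‖θ t - θstar‖^2
        - 2*a*(L (θ t) - L θstar + m/2*‖θ t - θstar‖^2 - Δ*e t) + a^2*σ^2 := by
      rw [hnorm]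
      have p1 : 2*a*(L (θ t) - L θstar + m/2*‖θ t - θstar‖^2 - Δ*e t)
          ≤ 2*a*⟪θ t - θstar, g t⟫ :=
        mul_le_mul_of_nonneg_left hinner (by positivity)
      have p2 : a^2*‖g t‖^2 ≤ a^2*σ^2 := mul_le_mul_of_nonneg_left hg2 (sq_nonneg a)
      linarith
    set c : ℝ := (t:ℝ) * m * (1 + t) / 4 with hc_def
    have hc : 0 ≤ c := by positivity
    have h5 := mul_le_mul_of_nonneg_left h4 hc
    have heq1 : c * (‖θ t - θstar‖^2
          - 2*a*(L (θ t) - L θstar + m/2*‖θ t - θstar‖^2 - Δ*e t) + a^2*σ^2)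
        = m*((t:ℝ)*((t:ℝ)-1))/4*‖θ t - θstar‖^2 - (t:ℝ)*(L (θ t) - L θstar)
          + σ^2*((t:ℝ)/(m*(1+t))) + Δ*t*e t := by
      rw [ha_def, hc_def]
      field_simp
      ring
    have heq2 : c * ‖θ (t+1) - θstar‖^2 = B (t+1) := by
      simp only [hB_def, hc_def]
      push_cast
      ring
    rw [heq1, heq2] at h5
    have hBt : B t = m*((t:ℝ)*((t:ℝ)-1))/4*‖θ t - θstar‖^2 := by
      simp only [hB_def]
    linarith
  -- sum the per-step inequality
  have hsum : ∑ t ∈ Finset.range T, (t : ℝ) * (L (θ t) - L θstar)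
      ≤ (B 0 - B T) + ∑ t ∈ Finset.range T, σ ^ 2 * ((t : ℝ) / (m * (1 + t)))
        + Δ * ∑ t ∈ Finset.range T, (t : ℝ) * e t := by
    have h1 : ∑ t ∈ Finset.range T, (t : ℝ) * (L (θ t) - L θstar)
        ≤ ∑ t ∈ Finset.range T,
            (B t - B (t + 1) + σ ^ 2 * ((t : ℝ) / (m * (1 + t))) + Δ * t * e t) :=
      Finset.sum_le_sum fun t ht => step t (Finset.mem_range.mp ht)
    rw [Finset.sum_add_distrib, Finset.sum_add_distrib, Finset.sum_range_sub' B T] at h1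
    calc ∑ t ∈ Finset.range T, (t : ℝ) * (L (θ t) - L θstar) ≤ _ := h1
      _ = (B 0 - B T) + ∑ t ∈ Finset.range T, σ ^ 2 * ((t : ℝ) / (m * (1 + t)))
          + Δ * ∑ t ∈ Finset.range T, (t : ℝ) * e t := by
        rw [Finset.mul_sum]
        congr 1
        apply Finset.sum_congr rfl
        intro t _
        ring
  have hB0 : B 0 = 0 := by simp [hB_def]
  have hBT : 0 ≤ B T := by
    simp only [hB_def]
    have h0 : (0:ℝ) ≤ (T:ℝ) * ((T:ℝ) - 1) := by nlinarith
    have h1 : (0:ℝ) ≤ m * ((T:ℝ) * ((T:ℝ) - 1)) / 4 :=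
      div_nonneg (mul_nonneg hm.le h0) (by norm_num)
    exact mul_nonneg h1 (by positivity)
  have hsum2 : ∑ t ∈ Finset.range T, σ ^ 2 * ((t : ℝ) / (m * (1 + t)))
      ≤ σ ^ 2 / m * ((T : ℝ) - 1) := by
    have hterm : ∀ t : ℕ, σ ^ 2 * ((t : ℝ) / (m * (1 + t)))
        = σ ^ 2 / m * ((t : ℝ) / (1 + t)) := by
      intro t
      have h1t : (0:ℝ) < 1 + (t:ℝ) := by positivity
      field_simp
    rw [Finset.sum_congr rfl (fun t _ => hterm t), ← Finset.mul_sum]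
    exact mul_le_mul_of_nonneg_left (sum_ratio_le_aux T (by omega)) (by positivity)
  clear_value B
  -- Gauss sum
  have hgauss : ∑ t ∈ Finset.range T, (t : ℝ) = (T : ℝ) * ((T : ℝ) - 1) / 2 := by
    have h1 := Finset.sum_range_id_mul_two T
    have h2 : ((∑ i ∈ Finset.range T, i : ℕ) : ℝ) * 2 = (T : ℝ) * ((T : ℝ) - 1) := by
      rw [← Nat.cast_ofNat, ← Nat.cast_mul, h1]
      have : (1:ℕ) ≤ T := by omega
      push_cast [Nat.cast_sub this]
      ring
    rw [Nat.cast_sum] at h2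
    push_cast at h2 ⊢
    linarith
  -- minimum
  set M : ℝ := (Finset.range T).inf' (Finset.nonempty_range_iff.mpr (by omega))
      (fun t => L (θ t) - L θstar) with hM_def
  have hMle : ∀ t ∈ Finset.range T, M ≤ L (θ t) - L θstar := fun t ht =>
    Finset.inf'_le _ ht
  have hMsum : M * ((T : ℝ) * ((T : ℝ) - 1) / 2)
      ≤ ∑ t ∈ Finset.range T, (t : ℝ) * (L (θ t) - L θstar) := by
    calc M * ((T : ℝ) * ((T : ℝ) - 1) / 2) = ∑ t ∈ Finset.range T, (t : ℝ) * M := by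
          rw [← Finset.sum_mul, hgauss, mul_comm]
      _ ≤ ∑ t ∈ Finset.range T, (t : ℝ) * (L (θ t) - L θstar) :=
          Finset.sum_le_sum fun t ht =>
            mul_le_mul_of_nonneg_left (hMle t ht) (by positivity)
  -- assemble
  set SE : ℝ := ∑ t ∈ Finset.range T, (t : ℝ) * e t with hSE_def
  have hSE : 0 ≤ SE := Finset.sum_nonneg fun t _ =>
    mul_nonneg (by positivity) (norm_nonneg _)
  have hmain : M * ((T : ℝ) * ((T : ℝ) - 1) / 2)
      ≤ σ ^ 2 / m * ((T : ℝ) - 1) + Δ * SE := by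
    have := hsum
    linarith
  have hP : (0:ℝ) < (T : ℝ) * ((T : ℝ) - 1) / 2 := by nlinarith
  have hMle2 : M ≤ (σ ^ 2 / m * ((T : ℝ) - 1) + Δ * SE)
      / ((T : ℝ) * ((T : ℝ) - 1) / 2) := by
    rw [le_div_iff₀ hP]
    exact hmain
  have hRHSsum : ∑ t ∈ Finset.range T,
      (2 * Δ * (t:ℝ) / ((T:ℝ) * ((T:ℝ) - 1))) * e t
      = 2 * Δ / ((T:ℝ) * ((T:ℝ) - 1)) * SE := by
    rw [hSE_def, Finset.mul_sum]
    apply Finset.sum_congr rfl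
    intro t _
    ring
  have hTne : (T:ℝ) ≠ 0 := by positivity
  have hT1 : (0:ℝ) < (T:ℝ) - 1 := by linarith
  have e1 : σ ^ 2 / m * ((T : ℝ) - 1) / ((T : ℝ) * ((T : ℝ) - 1) / 2)
      = 2 * σ ^ 2 / (m * (T:ℝ)) := by
    field_simp
  have e2 : Δ * SE / ((T : ℝ) * ((T : ℝ) - 1) / 2)
      = 2 * Δ / ((T:ℝ) * ((T:ℝ) - 1)) * SE := by
    field_simp
  have e3 : 2 * σ ^ 2 / (m * (T:ℝ)) ≤ 2 * σ ^ 2 / (m * ((T:ℝ) - 1)) := by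
    rw [div_le_div_iff₀ (by positivity) (by positivity)]
    nlinarith
  rw [add_div] at hMle2
  rw [e1, e2] at hMle2
  calc M ≤ 2 * σ ^ 2 / (m * (T:ℝ)) + 2 * Δ / ((T:ℝ) * ((T:ℝ) - 1)) * SE := hMle2
    _ ≤ 2 * σ ^ 2 / (m * ((T:ℝ) - 1)) + 2 * Δ / ((T:ℝ) * ((T:ℝ) - 1)) * SE := by
        linarith
    _ = 2 * σ ^ 2 / (m * ((T:ℝ) - 1)) + ∑ t ∈ Finset.range T,
          (2 * Δ * (t:ℝ) / ((T:ℝ) * ((T:ℝ) - 1))) * e t := by rw [hRHSsum]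
end

section
/- Let E be a real inner product space, let K be a nonempty compact topological space, and let L : E × K → ℝ be such that θ ↦ L(θ, δ) is convex and differentiable for every δ ∈ K, the gradient map (θ, δ) ↦ ∇_θ L(θ, δ) is continuous on E × K, and L is continuous. Fix θ₀ ∈ E and suppose the set of maximizers argmax_{δ ∈ K} L(θ₀, δ) is a singleton {δ*}. Then the max-function φ(θ) = max_{δ ∈ K} L(θ, δ) is differentiable at θ₀ and ∇φ(θ₀) = ∇_θ L(θ₀, δ*). -/
/-!
Pick a maximizer `δ θ` of `L θ ·` for every `θ`. Compactness and uniqueness of `δ*` force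
`δ θ → δ*`, hence `∇_θ L(θ, δ θ) → ∇_θ L(θ₀, δ*)`. Since `φ ≥ L(·, δ*)` with equality at `θ₀`,
`φ` is bounded below to first order by `∇_θ L(θ₀, δ*)`; since convexity makes `∇_θ L(θ, δ θ)`
a subgradient of `φ` at `θ`, the matching upper bound holds up to
`‖∇_θ L(θ, δ θ) - ∇_θ L(θ₀, δ*)‖ · ‖θ - θ₀‖ = o(‖θ - θ₀‖)`.
-/

open Filter Set Topology

theorem ConvexOn.add_le_of_hasFDerivAt {E : Type*} [NormedAddCommGroup E] [NormedSpace ℝ E]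
    {s : Set E} {f : E → ℝ} {f' : E →L[ℝ] ℝ} {x y : E}
    (hf : ConvexOn ℝ s f) (hx : x ∈ s) (hy : y ∈ s) (hd : HasFDerivAt f f' x) :
    f x + f' (y - x) ≤ f y := by
  set ℓ : ℝ →ᵃ[ℝ] E := AffineMap.lineMap x y
  have hline : ConvexOn ℝ (ℓ ⁻¹' s) (f ∘ ℓ) := hf.comp_affineMap ℓ
  have hderiv : HasDerivAt (f ∘ ℓ) (f' (y - x)) 0 :=
    HasFDerivAt.comp_hasDerivAt _ (by simpa [ℓ] using hd) AffineMap.hasDerivAt_lineMap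
  have hslope := hline.le_slope_of_hasDerivAt (by simpa [ℓ] using hx) (by simpa [ℓ] using hy)
    zero_lt_one hderiv
  simpa [ℓ, slope_def_field, le_sub_iff_add_le'] using hslope

theorem tendsto_of_forall_le_of_unique_max {X K β : Type*} [TopologicalSpace X]
    [TopologicalSpace K] [CompactSpace K] [Preorder β] [TopologicalSpace β] [OrderClosedTopology β]
    {F : X → K → β} (hF : Continuous fun p : X × K => F p.1 p.2) {x₀ : X} {k₀ : K}
    (huniq : ∀ k, (∀ k', F x₀ k' ≤ F x₀ k) → k = k₀) {s : X → K} (hs : ∀ x k, F x k ≤ F x (s x)) :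
    Tendsto s (𝓝 x₀) (𝓝 k₀) := by
  refine tendsto_nhds_of_unique_mapClusterPt fun k hk => huniq k fun k' => ?_
  obtain ⟨U, hU, hsU⟩ := mapClusterPt_iff_ultrafilter.1 hk
  have hx : Tendsto id (U : Filter X) (𝓝 x₀) := tendsto_id.mono_left hU
  exact le_of_tendsto_of_tendsto' ((hF.tendsto (x₀, k')).comp (hx.prodMk_nhds tendsto_const_nhds))
    ((hF.tendsto (x₀, k)).comp (hx.prodMk_nhds hsU)) fun x => hs x k'

theorem hasFDerivAt_of_le_of_subgradient_tendsto {E : Type*} [NormedAddCommGroup E]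
    [NormedSpace ℝ E] {φ f : E → ℝ} {f' : E →L[ℝ] ℝ} {G : E → E →L[ℝ] ℝ} {x₀ : E}
    (hf : HasFDerivAt f f' x₀) (hfφ : ∀ᶠ x in 𝓝 x₀, f x ≤ φ x) (hx₀ : φ x₀ = f x₀)
    (hG : Tendsto G (𝓝 x₀) (𝓝 f')) (hφ : ∀ᶠ x in 𝓝 x₀, φ x + G x (x₀ - x) ≤ φ x₀) :
    HasFDerivAt φ f' x₀ := by
  refine .of_isLittleO <| Asymptotics.isLittleO_iff.2 fun c hc => ?_
  filter_upwards [Asymptotics.isLittleO_iff.1 hf.isLittleO hc, hfφ, hφ,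
    (tendsto_iff_norm_sub_tendsto_zero.1 hG).eventually (eventually_le_nhds hc)]
    with x hlow hfφx hφx hGx
  have hup : φ x - φ x₀ - f' (x - x₀) ≤ c * ‖x - x₀‖ :=
    calc φ x - φ x₀ - f' (x - x₀) ≤ (G x - f') (x - x₀) := by
          rw [← neg_sub x x₀, map_neg] at hφx
          simp only [sub_apply]
          linarith
      _ ≤ ‖G x - f'‖ * ‖x - x₀‖ := le_of_abs_le ((G x - f').le_opNorm _)
      _ ≤ c * ‖x - x₀‖ := by gcongr
  rw [Real.norm_eq_abs, abs_le] at hlow ⊢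
  constructor <;> linarith [hlow.1]

/-- Danskin's theorem, singleton case: if the maximizer of `δ ↦ L θ₀ δ` is unique, then
the max-function `θ ↦ max_δ L θ δ` is differentiable at `θ₀` with gradient
`∇_θ L(θ₀, δ*)` (Theorem 2, final claim). -/
theorem danskin_singleton_gradient
    {E K : Type*} [NormedAddCommGroup E] [InnerProductSpace ℝ E]
    [TopologicalSpace K] [CompactSpace K] [Nonempty K]
    (L : E → K → ℝ) (gradL : E → K → E)
    (hconv : ∀ δ : K, ConvexOn ℝ Set.univ fun θ : E => L θ δ)
    (hdiff : ∀ (θ : E) (δ : K), HasFDerivAt (fun θ' : E => L θ' δ) (innerSL ℝ (gradL θ δ)) θ)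
    (hgradcont : Continuous fun p : E × K => gradL p.1 p.2)
    (hLcont : Continuous fun p : E × K => L p.1 p.2)
    (θ₀ : E) (δstar : K)
    (hmax : ∀ δ : K, L θ₀ δ ≤ L θ₀ δstar)
    (huniq : ∀ δ : K, (∀ δ' : K, L θ₀ δ' ≤ L θ₀ δ) → δ = δstar) :
    HasFDerivAt (fun θ : E => ⨆ δ : K, L θ δ) (innerSL ℝ (gradL θ₀ δstar)) θ₀ := by
  have hsup : ∀ {θ δ}, (∀ δ', L θ δ' ≤ L θ δ) → ⨆ δ', L θ δ' = L θ δ := fun h =>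
    IsGreatest.csSup_eq ⟨mem_range_self _, forall_mem_range.2 h⟩
  choose δ hδ using fun θ => (hLcont.comp (Continuous.prodMk_right θ)).exists_forall_ge (by simp)
  have hgrad_tendsto : Tendsto (fun θ => innerSL ℝ (gradL θ (δ θ))) (𝓝 θ₀)
      (𝓝 (innerSL ℝ (gradL θ₀ δstar))) :=
    (innerSL ℝ).continuous.tendsto _ |>.comp <| (hgradcont.tendsto _).comp <|
      tendsto_id.prodMk_nhds (tendsto_of_forall_le_of_unique_max hLcont huniq hδ)
  refine hasFDerivAt_of_le_of_subgradient_tendsto (hdiff θ₀ δstar) (.of_forall fun θ => ?_)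
    (hsup hmax) hgrad_tendsto (.of_forall fun θ => ?_)
  · rw [hsup (hδ θ)]
    exact hδ θ δstar
  · rw [hsup (hδ θ), hsup hmax]
    exact ((hconv (δ θ)).add_le_of_hasFDerivAt trivial trivial (hdiff θ (δ θ))).trans (hmax _)
end

section
/- Let E be a real inner product space, let T ≥ 1 be a natural number, let L : E → ℝ be convex and differentiable, let θ* ∈ E, let Δ > 0, σ > 0 and α > 0, and let θ_0, θ_1, …, θ_T ∈ E satisfy θ_{t+1} = θ_t − α·g_t for t = 0, …, T−1, where each g_t ∈ E satisfies ‖g_t‖ ≤ σ, ‖θ_0 − θ*‖ ≤ Δ, and ‖θ_t − θ*‖ ≤ Δ for all t = 0, …, T−1. Then (1/T)·∑_{t=0}^{T−1} (L(θ_t) − L(θ*)) ≤ Δ²/(2αT) + ασ²/2 + (Δ/T)·∑_{t=0}^{T−1} ‖∇L(θ_t) − g_t‖. -/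
/-!
Convexity gives `L θₜ - L θ* ≤ ⟪∇L θₜ, θₜ - θ*⟫ = ⟪gₜ, θₜ - θ*⟫ + ⟪∇L θₜ - gₜ, θₜ - θ*⟫`.
Expanding `‖θₜ₊₁ - θ*‖² = ‖θₜ - α gₜ - θ*‖²` writes the first term as
`(‖θₜ - θ*‖² - ‖θₜ₊₁ - θ*‖²) / (2α) + α ‖gₜ‖² / 2`, whose first part telescopes over `t`;
Cauchy–Schwarz bounds the second term by `Δ ‖∇L θₜ - gₜ‖`.
-/

open Finset
open scoped RealInnerProductSpace

section

variable {E : Type*} [NormedAddCommGroup E] [InnerProductSpace ℝ E]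

/-- Restrict `f` to the segment from `y` to `x` and compare its slope on `[0, 1]` with its
derivative at `1`. -/
theorem ConvexOn.sub_le_inner_of_hasFDerivAt {s : Set E} {f : E → ℝ} {f' x y : E}
    (hf : ConvexOn ℝ s f) (hx : x ∈ s) (hy : y ∈ s) (hf' : HasFDerivAt f (innerSL ℝ f') x) :
    f x - f y ≤ ⟪f', x - y⟫ := by
  let φ := f ∘ AffineMap.lineMap (k := ℝ) y x
  have hφ : ConvexOn ℝ (AffineMap.lineMap y x ⁻¹' s) φ := hf.comp_affineMap _
  have hφ' : HasDerivAt φ ⟪f', x - y⟫ 1 := by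
    have hf'' : HasFDerivAt f (innerSL ℝ f') (AffineMap.lineMap y x (1 : ℝ)) := by simpa using hf'
    simpa using hf''.comp_hasDerivAt (1 : ℝ) AffineMap.hasDerivAt_lineMap
  have hslope := hφ.slope_le_of_hasDerivAt (by simpa using hy) (by simpa using hx) one_pos hφ'
  simpa [φ, slope] using hslope

theorem real_inner_eq_of_sub_smul {α : ℝ} (hα : α ≠ 0) (g x z : E) :
    ⟪g, x - z⟫ = (‖x - z‖ ^ 2 - ‖x - α • g - z‖ ^ 2) / (2 * α) + α * ‖g‖ ^ 2 / 2 := by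
  rw [sub_right_comm, norm_sub_sq_real (x - z), inner_smul_right, norm_smul, real_inner_comm,
    Real.norm_eq_abs, mul_pow, sq_abs]
  field_simp
  ring

theorem ConvexOn.sub_le_of_approx_gradient_step {s : Set E} {f : E → ℝ} {f' g x z : E} {α : ℝ}
    (hf : ConvexOn ℝ s f) (hx : x ∈ s) (hz : z ∈ s) (hf' : HasFDerivAt f (innerSL ℝ f') x)
    (hα : α ≠ 0) :
    f x - f z ≤ (‖x - z‖ ^ 2 - ‖x - α • g - z‖ ^ 2) / (2 * α)
      + (α * ‖g‖ ^ 2 / 2 + ‖f' - g‖ * ‖x - z‖) := by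
  calc f x - f z ≤ ⟪f', x - z⟫ := hf.sub_le_inner_of_hasFDerivAt hx hz hf'
    _ = ⟪g, x - z⟫ + ⟪f' - g, x - z⟫ := by rw [inner_sub_left]; ring
    _ ≤ _ := by
      rw [real_inner_eq_of_sub_smul hα, add_assoc]
      gcongr
      exact real_inner_le_norm _ _

theorem ConvexOn.sum_sub_le_of_approx_gradient_descent_s7 {s : Set E} {f : E → ℝ} {f' : E → E}
    {θ g : ℕ → E} {z : E} {α : ℝ} {T : ℕ} (hf : ConvexOn ℝ s f) (hθs : ∀ t < T, θ t ∈ s)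
    (hz : z ∈ s) (hf' : ∀ t < T, HasFDerivAt f (innerSL ℝ (f' (θ t))) (θ t)) (hα : 0 < α)
    (hupd : ∀ t < T, θ (t + 1) = θ t - α • g t) :
    ∑ t ∈ range T, (f (θ t) - f z) ≤ ‖θ 0 - z‖ ^ 2 / (2 * α)
      + ∑ t ∈ range T, (α * ‖g t‖ ^ 2 / 2 + ‖f' (θ t) - g t‖ * ‖θ t - z‖) := by
  calc ∑ t ∈ range T, (f (θ t) - f z)
      ≤ ∑ t ∈ range T, ((‖θ t - z‖ ^ 2 - ‖θ (t + 1) - z‖ ^ 2) / (2 * α)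
          + (α * ‖g t‖ ^ 2 / 2 + ‖f' (θ t) - g t‖ * ‖θ t - z‖)) := by
        refine sum_le_sum fun t ht => ?_
        rw [mem_range] at ht
        rw [hupd t ht]
        exact hf.sub_le_of_approx_gradient_step (hθs t ht) hz (hf' t ht) hα.ne'
    _ = (‖θ 0 - z‖ ^ 2 - ‖θ T - z‖ ^ 2) / (2 * α)
          + ∑ t ∈ range T, (α * ‖g t‖ ^ 2 / 2 + ‖f' (θ t) - g t‖ * ‖θ t - z‖) := by
        rw [sum_add_distrib, ← sum_div, sum_range_sub' (fun t => ‖θ t - z‖ ^ 2)]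
    _ ≤ _ := by
        gcongr
        exact sub_le_self _ (sq_nonneg _)

end

theorem approx_gd_average_bound_convex_general
    {E : Type*} [NormedAddCommGroup E] [InnerProductSpace ℝ E]
    (T : ℕ)
    (L : E → ℝ) (gradL : E → E)
    (hconv : ConvexOn ℝ Set.univ L)
    (hgrad : ∀ x, HasFDerivAt L (innerSL ℝ (gradL x)) x)
    (θstar : E) (Δ σ α : ℝ) (hα : 0 < α)
    (θ g : ℕ → E)
    (hupd : ∀ t < T, θ (t + 1) = θ t - α • g t)
    (hg : ∀ t < T, ‖g t‖ ≤ σ)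
    (hθ0 : ‖θ 0 - θstar‖ ≤ Δ)
    (hθ : ∀ t < T, ‖θ t - θstar‖ ≤ Δ) :
    (1 / T) * ∑ t ∈ Finset.range T, (L (θ t) - L θstar)
      ≤ Δ ^ 2 / (2 * α * T) + α * σ ^ 2 / 2
        + (Δ / T) * ∑ t ∈ Finset.range T, ‖gradL (θ t) - g t‖ := by
  have hsum : ∑ t ∈ range T, (L (θ t) - L θstar)
      ≤ Δ ^ 2 / (2 * α) + T * (α * σ ^ 2 / 2) + Δ * ∑ t ∈ range T, ‖gradL (θ t) - g t‖ :=
    calc ∑ t ∈ range T, (L (θ t) - L θstar)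
        ≤ ‖θ 0 - θstar‖ ^ 2 / (2 * α)
          + ∑ t ∈ range T, (α * ‖g t‖ ^ 2 / 2 + ‖gradL (θ t) - g t‖ * ‖θ t - θstar‖) :=
          hconv.sum_sub_le_of_approx_gradient_descent_s7 (fun _ _ => Set.mem_univ _)
            (Set.mem_univ _) (fun t _ => hgrad (θ t)) hα hupd
      _ ≤ Δ ^ 2 / (2 * α) + ∑ t ∈ range T, (α * σ ^ 2 / 2 + ‖gradL (θ t) - g t‖ * Δ) := by
          gcongr with t ht
          · exact hg t (mem_range.mp ht)
          · exact hθ t (mem_range.mp ht)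
      _ = _ := by
          rw [sum_add_distrib, sum_const, card_range, nsmul_eq_mul, mul_sum, add_assoc]
          simp only [mul_comm Δ]
  -- for `T = 0` the convention `x / 0 = 0` reduces the claim to `0 ≤ α * σ ^ 2 / 2`
  rcases T.eq_zero_or_pos with rfl | hT
  · simp only [range_zero, sum_empty, mul_zero, CharP.cast_eq_zero, div_zero, zero_add]
    positivity
  calc (1 / T : ℝ) * ∑ t ∈ range T, (L (θ t) - L θstar)
      ≤ (1 / T) * (Δ ^ 2 / (2 * α) + T * (α * σ ^ 2 / 2)
          + Δ * ∑ t ∈ range T, ‖gradL (θ t) - g t‖) := by gcongr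
    _ = _ := by field_simp

/-- Average suboptimality bound for approximate gradient descent on a convex objective
with constant learning rate. -/
theorem approx_gd_average_bound_convex
    {E : Type*} [NormedAddCommGroup E] [InnerProductSpace ℝ E]
    (T : ℕ) (hT : 1 ≤ T)
    (L : E → ℝ) (gradL : E → E)
    (hconv : ConvexOn ℝ Set.univ L)
    (hgrad : ∀ x, HasFDerivAt L (innerSL ℝ (gradL x)) x)
    (θstar : E) (Δ σ α : ℝ) (hΔ : 0 < Δ) (hσ : 0 < σ) (hα : 0 < α)
    (θ g : ℕ → E)
    (hupd : ∀ t < T, θ (t + 1) = θ t - α • g t)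
    (hg : ∀ t < T, ‖g t‖ ≤ σ)
    (hθ0 : ‖θ 0 - θstar‖ ≤ Δ)
    (hθ : ∀ t < T, ‖θ t - θstar‖ ≤ Δ) :
    (1 / T) * ∑ t ∈ Finset.range T, (L (θ t) - L θstar)
      ≤ Δ ^ 2 / (2 * α * T) + α * σ ^ 2 / 2
        + (Δ / T) * ∑ t ∈ Finset.range T, ‖gradL (θ t) - g t‖ :=
  approx_gd_average_bound_convex_general T L gradL hconv hgrad θstar Δ σ α hα θ g hupd hg hθ0 hθ
end

section
/- Let E be a real inner product space, let μ₀ > 0 and σ > 0, and let L : E → ℝ be differentiable and satisfy ⟨∇L(x), x − y⟩ ≥ L(x) − L(y) + (μ₀/2)·‖x − y‖² for all x, y ∈ E. Let t be a natural number, let θ_t, θ*, g_t ∈ E with ‖g_t‖ ≤ σ, let α_t = 2/(μ₀(t+1)), and set θ_{t+1} = θ_t − α_t·g_t. Then t·(L(θ_t) − L(θ*)) ≤ t·σ²/(μ₀(t+1)) + (μ₀·t·(t−1)/4)·‖θ_t − θ*‖² − (μ₀·t·(t+1)/4)·‖θ_{t+1} − θ*‖² + t·‖∇L(θ_t) − g_t‖·‖θ_t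 − θ*‖. -/
open scoped RealInnerProductSpace

/-- Per-iteration weighted bound for approximate gradient descent on a strongly convex
objective with decaying learning rate `α_t = 2/(μ₀(t+1))`. -/
theorem approx_gd_weighted_step_bound_strongly_convex
    {E : Type*} [NormedAddCommGroup E] [InnerProductSpace ℝ E]
    (μ₀ σ : ℝ) (hμ₀ : 0 < μ₀) (hσ : 0 < σ)
    (L : E → ℝ) (gradL : E → E)
    (hgrad : ∀ x, HasFDerivAt L (innerSL ℝ (gradL x)) x)
    (hsc : ∀ x y : E, ⟪gradL x, x - y⟫ ≥ L x - L y + (μ₀ / 2) * ‖x - y‖ ^ 2)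
    (t : ℕ) (θt θstar gt θt' : E) (hgt : ‖gt‖ ≤ σ)
    (hupd : θt' = θt - (2 / (μ₀ * (t + 1))) • gt) :
    (t : ℝ) * (L θt - L θstar)
      ≤ t * σ ^ 2 / (μ₀ * (t + 1))
        + (μ₀ * t * (t - 1) / 4) * ‖θt - θstar‖ ^ 2
        - (μ₀ * t * (t + 1) / 4) * ‖θt' - θstar‖ ^ 2
        + t * ‖gradL θt - gt‖ * ‖θt - θstar‖ := by
  have ht1 : (0:ℝ) < (t:ℝ) + 1 := by positivity
  obtain ⟨α, hα⟩ : ∃ α : ℝ, α = 2 / (μ₀ * (t + 1)) := ⟨_, rfl⟩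
  have hden : μ₀ * ((t:ℝ) + 1) ≠ 0 := by positivity
  have hαpos : 0 < α := by rw [hα]; positivity
  have h2 : μ₀ * ((t:ℝ) + 1) * α = 2 := by rw [hα]; field_simp
  have hd : θt' - θstar = (θt - θstar) - α • gt := by rw [hupd, hα]; abel
  have hexp : ‖θt' - θstar‖^2 = ‖θt - θstar‖^2 - 2 * α * ⟪gt, θt - θstar⟫ + α^2 * ‖gt‖^2 := by
    rw [hd, @norm_sub_sq_real, real_inner_smul_right, norm_smul, real_inner_comm,
      Real.norm_eq_abs, abs_of_pos hαpos]
    ring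
  have htnn : (0:ℝ) ≤ (t:ℝ) := Nat.cast_nonneg t
  have hgt2 : ‖gt‖^2 ≤ σ^2 := by nlinarith [norm_nonneg gt]
  have hsc1 := hsc θt θstar
  have h1 : (t:ℝ) * (L θt - L θstar)
      ≤ t * ⟪gradL θt, θt - θstar⟫ - μ₀ * t / 2 * ‖θt - θstar‖^2 := by
    nlinarith [mul_le_mul_of_nonneg_left hsc1.le htnn]
  have hsplit : ⟪gradL θt, θt - θstar⟫
      = ⟪gt, θt - θstar⟫ + ⟪gradL θt - gt, θt - θstar⟫ := by
    rw [inner_sub_left]; ring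
  have h3 : (t:ℝ) * ⟪gradL θt - gt, θt - θstar⟫ ≤ t * (‖gradL θt - gt‖ * ‖θt - θstar‖) :=
    mul_le_mul_of_nonneg_left (real_inner_le_norm _ _) htnn
  have hQ : (t:ℝ) * ⟪gt, θt - θstar⟫
      = μ₀ * t * (t + 1) / 4 * ‖θt - θstar‖^2 - μ₀ * t * (t + 1) / 4 * ‖θt' - θstar‖^2
        + t * α * ‖gt‖^2 / 2 := by
    linear_combination (μ₀ * t * (t + 1) / 4) * hexp
      + ((t:ℝ) * α * ‖gt‖^2 / 4 - t * ⟪gt, θt - θstar⟫ / 2) * h2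
  have hrhs : (t:ℝ) * σ^2 / (μ₀ * (t + 1)) = t * σ^2 * α / 2 := by
    rw [div_eq_iff hden]
    linear_combination (-(t:ℝ) * σ^2 / 2) * h2
  have h4 : (t:ℝ) * α * ‖gt‖^2 / 2 ≤ t * σ^2 / (μ₀ * (t + 1)) := by
    rw [hrhs]
    nlinarith [mul_le_mul_of_nonneg_left hgt2 (by positivity : (0:ℝ) ≤ t * α / 2)]
  have h2' : (t:ℝ) * ⟪gradL θt, θt - θstar⟫
      = t * ⟪gt, θt - θstar⟫ + t * ⟪gradL θt - gt, θt - θstar⟫ := by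
    rw [hsplit]; ring
  linarith [h1, h2', h3, hQ, h4]
end
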